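/- Let B be a bipartite graph whose two vertex classes both have size n, let d₁, …, d_n be the degrees of the vertices in one of the classes, and suppose d_k ≥ 1 for all k. Then the number μ(B) of perfect matchings of B satisfies μ(B) ≤ ∏_{k=1}^{n} (d_k!)^{1/d_k}. -/

import Mathlib

open scoped Classical

/-- Degree of a vertex of the first class of a bipartite graph `E ⊆ U × W`. -/
noncomputable def degL {U W : Type*} (E : Finset (U × W)) (a : U) : ℕ :=
  (E.filter fun e => e.1 = a).card

/-!
Schrijver's proof, by induction on `n`. Let `S` be the set of perfect matchings, `μ = #S`, and
`μᵢₖ` the number of those with `σ i = k`. Restricting such a `σ` is an injection into the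
perfect matchings of the minor obtained by deleting row `i` and column `k`, so by induction
`μᵢₖ` is at most the Brégman product of that minor. For each row, weighted AM-GM gives
`μ^μ ≤ dᵢ^μ ∏ₖ μᵢₖ^μᵢₖ = ∏_{σ ∈ S} dᵢ μ_{i,σ i}`. Multiplying over the rows and bounding each
`μ_{i,σ i}` by its minor, the factor belonging to a matching `σ` equals `(∏ⱼ (dⱼ!)^{1/dⱼ})^n`
exactly: row `j` survives in the `n - 1` minors at `(i, σ i)`, `i ≠ j`, and loses a neighbour in
exactly `dⱼ - 1` of them, while `dⱼ · (dⱼ - 1)! = dⱼ!`. Hence `μ^{μn} ≤ (∏ⱼ (dⱼ!)^{1/dⱼ})^{μn}`.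
-/

open Finset

theorem sum_pow_sum_le_card_pow_mul_prod_pow_self {ι : Type*} (s : Finset ι) (t : ι → ℕ) :
    (∑ i ∈ s, t i) ^ (∑ i ∈ s, t i) ≤ #s ^ (∑ i ∈ s, t i) * ∏ i ∈ s, t i ^ t i := by
  set T := ∑ i ∈ s, t i
  have hprod_pos : 0 < ∏ i ∈ s, t i ^ t i :=
    prod_pos fun i _ => by rcases Nat.eq_zero_or_pos (t i) with h | h <;> simp [h]
  rcases Nat.eq_zero_or_pos T with hT | hT
  · rw [hT, pow_zero, pow_zero, one_mul]
    exact hprod_pos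
  have hT' : (0 : ℝ) < T := by exact_mod_cast hT
  -- weighted AM-GM with weights `t i` at the points `(t i)⁻¹`; zero weights drop out
  have amgm := Real.geom_mean_le_arith_mean s (fun i => (t i : ℝ)) (fun i => (t i : ℝ)⁻¹)
    (fun i _ => by positivity) (by exact_mod_cast hT) (fun i _ => by positivity)
  simp only [← Nat.cast_sum, Real.rpow_natCast, inv_pow, prod_inv_distrib] at amgm
  have hsum : ∑ i ∈ s, (t i : ℝ) * (t i : ℝ)⁻¹ ≤ #s := by
    simpa using sum_le_card_nsmul s (fun i => (t i : ℝ) * (t i : ℝ)⁻¹) 1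
      fun i _ => mul_inv_le_one
  rw [Real.rpow_inv_le_iff_of_pos (by positivity) (by positivity) hT', Real.rpow_natCast] at amgm
  have key : ((∏ i ∈ s, t i ^ t i : ℕ) : ℝ)⁻¹ ≤ (#s / T : ℝ) ^ T := by
    push_cast
    exact amgm.trans (pow_le_pow_left₀ (by positivity) (div_le_div_of_nonneg_right hsum hT'.le) T)
  rw [div_pow, inv_le_iff_one_le_mul₀ (by exact_mod_cast hprod_pos), ← mul_div_right_comm,
    one_le_div (by positivity)] at key
  exact_mod_cast key

theorem card_pow_card_le_card_pow_mul_prod_card_fiber {α β : Type*} {s : Finset α} {t : Finset β}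
    {f : α → β} (hf : ∀ a ∈ s, f a ∈ t) :
    #s ^ #s ≤ #t ^ #s * ∏ a ∈ s, #{b ∈ s | f b = f a} := by
  have hsum : ∑ y ∈ t, #{b ∈ s | f b = y} = #s := (card_eq_sum_card_fiberwise hf).symm
  have hprod : ∏ a ∈ s, #{b ∈ s | f b = f a} =
      ∏ y ∈ t, #{b ∈ s | f b = y} ^ #{b ∈ s | f b = y} := by
    rw [← prod_fiberwise_of_maps_to hf]
    refine prod_congr rfl fun y _ => ?_
    rw [prod_congr rfl fun a ha => by rw [(mem_filter.1 ha).2], prod_const]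
  have := sum_pow_sum_le_card_pow_mul_prod_pow_self t fun y => #{b ∈ s | f b = y}
  rwa [hsum, ← hprod] at this

namespace Bregman

variable {U W : Type*}

lemma card_pow_le_prod_prod_card_mul_card_fiber [Fintype U] (S : Finset (U ≃ W))
    (N : U → Finset W) (hN : ∀ σ ∈ S, ∀ i, σ i ∈ N i) :
    #S ^ (#S * Fintype.card U) ≤ ∏ σ ∈ S, ∏ i, #(N i) * #{τ ∈ S | τ i = σ i} := by
  calc #S ^ (#S * Fintype.card U) = ∏ _i : U, #S ^ #S := by
        rw [prod_const, card_univ, pow_mul]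
    _ ≤ ∏ i : U, #(N i) ^ #S * ∏ σ ∈ S, #{τ ∈ S | τ i = σ i} :=
        prod_le_prod' fun i _ =>
          card_pow_card_le_card_pow_mul_prod_card_fiber fun σ hσ => hN σ hσ i
    _ = ∏ σ ∈ S, ∏ i, #(N i) * #{τ ∈ S | τ i = σ i} := by
        simp only [← prod_const, ← prod_mul_distrib]
        exact prod_comm

noncomputable def factorialRoot (d : ℕ) : ℝ := (d.factorial : ℝ) ^ (d : ℝ)⁻¹

lemma factorialRoot_nonneg (d : ℕ) : 0 ≤ factorialRoot d := by
  unfold factorialRoot; positivity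

lemma factorialRoot_pow_self (d : ℕ) : factorialRoot d ^ d = d.factorial := by
  rcases eq_or_ne d 0 with rfl | hd
  · simp
  · rw [factorialRoot, ← Real.rpow_natCast, ← Real.rpow_mul (by positivity),
      inv_mul_cancel₀ (by exact_mod_cast hd), Real.rpow_one]

lemma mul_factorialRoot_pred_pow_mul_factorialRoot_pow {d n : ℕ} (hd : d ≠ 0) (hdn : d ≤ n) :
    d * factorialRoot (d - 1) ^ (d - 1) * factorialRoot d ^ (n - d) = factorialRoot d ^ n := by
  rw [factorialRoot_pow_self, ← Nat.cast_mul, Nat.mul_factorial_pred hd, ← factorialRoot_pow_self,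
    ← pow_add, Nat.add_sub_cancel' hdn]

noncomputable def minorFactor (E : Finset (U × W)) (j : U) (k : W) : ℝ :=
  if (j, k) ∈ E then factorialRoot (degL E j - 1) else factorialRoot (degL E j)

variable [Fintype W]

lemma degL_eq_card (E : Finset (U × W)) (a : U) : degL E a = #{w | (a, w) ∈ E} := by
  refine card_nbij' Prod.snd (fun w => (a, w)) ?_ ?_ ?_ ?_ <;> intro x <;> aesop

lemma prod_erase_minorFactor (E : Finset (U × W)) (j : U) {k₀ : W} (hk₀ : (j, k₀) ∈ E) :
    ∏ k ∈ univ.erase k₀, minorFactor E j k =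
      factorialRoot (degL E j - 1) ^ (degL E j - 1) *
        factorialRoot (degL E j) ^ (Fintype.card W - degL E j) := by
  have hin : #{k ∈ univ.erase k₀ | (j, k) ∈ E} = degL E j - 1 := by
    rw [filter_erase, card_erase_of_mem (by simpa using hk₀), degL_eq_card]
  have hout : #{k ∈ univ.erase k₀ | (j, k) ∉ E} = Fintype.card W - degL E j := by
    rw [filter_erase, erase_eq_of_notMem (by simpa using hk₀), filter_not,
      card_sdiff_of_subset (filter_subset _ _), card_univ, degL_eq_card]
  simp only [minorFactor]
  rw [prod_ite, prod_const, prod_const, hin, hout]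

variable [Fintype U]

noncomputable def perfectMatchings (E : Finset (U × W)) : Finset (U ≃ W) :=
  {f | ∀ u, (u, f u) ∈ E}

@[simp]
lemma mem_perfectMatchings {E : Finset (U × W)} {σ : U ≃ W} :
    σ ∈ perfectMatchings E ↔ ∀ u, (u, σ u) ∈ E := by
  simp [perfectMatchings]

lemma card_perfectMatchings (E : Finset (U × W)) :
    #(perfectMatchings E) = Nat.card {f : U ≃ W // ∀ u, (u, f u) ∈ E} := by
  rw [Nat.card_eq_fintype_card, Fintype.card_subtype, perfectMatchings]

lemma degL_pos_of_mem_perfectMatchings {E : Finset (U × W)} {σ : U ≃ W}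
    (hσ : σ ∈ perfectMatchings E) (j : U) : 0 < degL E j := by
  rw [degL_eq_card]
  exact card_pos.2 ⟨σ j, by simpa using mem_perfectMatchings.1 hσ j⟩

lemma prod_degL_mul_prod_minorFactor {E : Finset (U × W)} {σ : U ≃ W}
    (hσ : σ ∈ perfectMatchings E) :
    ∏ i, (degL E i : ℝ) * ∏ j ∈ univ.erase i, minorFactor E j (σ i) =
      (∏ u, factorialRoot (degL E u)) ^ Fintype.card W := by
  have hswap : ∏ i, ∏ j ∈ univ.erase i, minorFactor E j (σ i) =
      ∏ j, ∏ k ∈ univ.erase (σ j), minorFactor E j k := by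
    rw [prod_comm' (t' := univ) (s' := fun j => univ.erase j) (by simp [ne_comm])]
    refine prod_congr rfl fun j _ => prod_equiv σ (by simp) (by simp)
  rw [prod_mul_distrib, hswap, ← prod_mul_distrib, ← prod_pow]
  refine prod_congr rfl fun j _ => ?_
  rw [prod_erase_minorFactor E j (mem_perfectMatchings.1 hσ j), ← mul_assoc]
  refine mul_factorialRoot_pred_pow_mul_factorialRoot_pow
    (degL_pos_of_mem_perfectMatchings hσ j).ne' ?_
  rw [degL_eq_card]
  exact card_le_univ _

noncomputable def minor (E : Finset (U × W)) (i : U) (k : W) :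
    Finset ({u // u ≠ i} × {w // w ≠ k}) :=
  {p | (p.1.1, p.2.1) ∈ E}

lemma degL_minor (E : Finset (U × W)) (i : U) (k : W) (a : {u // u ≠ i}) :
    degL (minor E i k) a = if (a.1, k) ∈ E then degL E a - 1 else degL E a := by
  calc degL (minor E i k) a = #(({w | (a.1, w) ∈ E} : Finset W).subtype (· ≠ k)) := by
        rw [degL_eq_card]; congr 1; ext; simp [minor]
    _ = _ := by
      rw [card_subtype, filter_ne', degL_eq_card]
      split_ifs with h <;> simp [card_erase_of_mem, h]

lemma prod_factorialRoot_degL_minor (E : Finset (U × W)) (i : U) (k : W) :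
    ∏ a, factorialRoot (degL (minor E i k) a) = ∏ j ∈ univ.erase i, minorFactor E j k := by
  simp only [minorFactor, degL_minor, apply_ite]
  exact (prod_subtype (p := (· ≠ i)) (univ.erase i) (fun _ => by simp)
    fun j => if (j, k) ∈ E then factorialRoot (degL E j - 1) else factorialRoot (degL E j)).symm

lemma card_filter_apply_eq_le_card_perfectMatchings_minor (E : Finset (U × W)) (i : U) (k : W) :
    #{σ ∈ perfectMatchings E | σ i = k} ≤ #(perfectMatchings (minor E i k)) := by
  rw [← Fintype.card_coe, ← Fintype.card_coe]
  have hσ (σ : {σ // σ ∈ {σ ∈ perfectMatchings E | σ i = k}}) :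
      (∀ u, (u, σ.1 u) ∈ E) ∧ σ.1 i = k :=
    (mem_filter.1 σ.2).imp_left mem_perfectMatchings.1
  refine Fintype.card_le_of_injective (fun σ => ⟨σ.1.subtypeEquiv fun u => by
    simpa only [(hσ σ).2] using (σ.1.injective.ne_iff (x := u) (y := i)).symm, ?_⟩) ?_
  · simp [minor, (hσ σ).1]
  · intro σ τ h
    ext u
    by_cases hu : u = i
    · rw [hu, (hσ σ).2, (hσ τ).2]
    · simpa using congrArg (fun g => (g.1 ⟨u, hu⟩ : W)) h

theorem card_perfectMatchings_le (E : Finset (U × W)) :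
    (#(perfectMatchings E) : ℝ) ≤ ∏ u, factorialRoot (degL E u) := by
  induction hn : Fintype.card U using Nat.strong_induction_on generalizing U W with
  | _ n IH =>
  set S := perfectMatchings E
  have hb : 0 ≤ ∏ u, factorialRoot (degL E u) := prod_nonneg fun u _ => factorialRoot_nonneg _
  rcases S.eq_empty_or_nonempty with hS | ⟨σ₀, hσ₀⟩
  · simpa [hS] using hb
  rcases Nat.eq_zero_or_pos n with rfl | hn0
  · have : IsEmpty U := Fintype.card_eq_zero_iff.1 hn
    simpa using card_le_one_of_subsingleton S
  have hW : Fintype.card W = n := hn ▸ (Fintype.card_congr σ₀).symm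
  have hminor (i : U) (k : W) :
      (#{σ ∈ S | σ i = k} : ℝ) ≤ ∏ j ∈ univ.erase i, minorFactor E j k :=
    calc (#{σ ∈ S | σ i = k} : ℝ) ≤ #(perfectMatchings (minor E i k)) := by
          exact_mod_cast card_filter_apply_eq_le_card_perfectMatchings_minor E i k
      _ ≤ ∏ a, factorialRoot (degL (minor E i k) a) :=
          IH (n - 1) (by omega) (minor E i k) (by simp [hn])
      _ = ∏ j ∈ univ.erase i, minorFactor E j k := prod_factorialRoot_degL_minor E i k
  have key : ((#S : ℝ) ^ n) ^ #S ≤ ((∏ u, factorialRoot (degL E u)) ^ n) ^ #S :=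
    calc ((#S : ℝ) ^ n) ^ #S = #S ^ (#S * Fintype.card U) := by rw [← pow_mul, mul_comm, hn]
      _ ≤ ∏ σ ∈ S, ∏ i, (degL E i : ℝ) * #{τ ∈ S | τ i = σ i} := by
          simp only [degL_eq_card]
          exact_mod_cast card_pow_le_prod_prod_card_mul_card_fiber S _
            fun σ hσ i => by simpa using mem_perfectMatchings.1 hσ i
      _ ≤ ∏ σ ∈ S, ∏ i, (degL E i : ℝ) * ∏ j ∈ univ.erase i, minorFactor E j (σ i) :=
          prod_le_prod (fun _ _ => by positivity) fun σ _ =>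
            prod_le_prod (fun _ _ => by positivity) fun i _ =>
              mul_le_mul_of_nonneg_left (hminor i (σ i)) (by positivity)
      _ = ∏ _σ ∈ S, (∏ u, factorialRoot (degL E u)) ^ n :=
          prod_congr rfl fun σ hσ => by rw [prod_degL_mul_prod_minorFactor hσ, hW]
      _ = ((∏ u, factorialRoot (degL E u)) ^ n) ^ #S := prod_const _
  exact le_of_pow_le_pow_left₀ hn0.ne' hb <|
    le_of_pow_le_pow_left₀ (card_pos.2 ⟨σ₀, hσ₀⟩).ne' (by positivity) key

end Bregman

/-- Brégman's theorem: the number of perfect matchings of a bipartite graph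
with classes of size `n` is at most `∏ₖ (dₖ!)^{1/dₖ}`, where the `dₖ` are the degrees of
the vertices of one class. -/
theorem bregman_upper_bound_on_perfect_matchings :
    ∀ n : ℕ,
    ∀ (U W : Type) [Fintype U] [Fintype W] [DecidableEq U] [DecidableEq W],
      Fintype.card U = n → Fintype.card W = n →
    ∀ E : Finset (U × W),
      (∀ u : U, 1 ≤ degL E u) →
      ((Nat.card {f : U ≃ W // ∀ u, (u, f u) ∈ E}) : ℝ) ≤
        ∏ u : U, ((Nat.factorial (degL E u) : ℝ)) ^ (((degL E u : ℝ))⁻¹) := by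
  intro n U W _ _ _ _ _ _ E _
  rw [← Bregman.card_perfectMatchings]
  exact Bregman.card_perfectMatchings_le E
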